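/- arXiv:2507.09413 — 3 statements merged into one kernel-verified Lean document; each statement's English description precedes it below -/
import Mathlib

section
/- Let α, β ∈ ℝ and let p_yy, p_yz, p_zz : ℝ → ℝ be infinitely differentiable functions satisfying, for all t ∈ ℝ: p_yy'(t) = −4β²(2 p_yy(t) + p_zz(t) − 1) − 4α p_yz(t), p_yz'(t) = −2β² p_yz(t) − 2α p_zz(t) + 2α p_yy(t), and p_zz'(t) = 4α p_yz(t). Then p_zz satisfies the third-order ODE p_zz'''(t) = −10β² p_zz''(t) − 16(α² + β⁴) p_zz'(t) − 96 α² β² p_zz(t) + 32 α² β² for all t ∈ ℝ. -/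
/-- The exact third-order closed equation for `p_zz`. -/
theorem third_order_ode_for_pzz (α β : ℝ) (pyy pyz pzz : ℝ → ℝ)
    (hyy : ContDiff ℝ (⊤ : ℕ∞) pyy) (hyz : ContDiff ℝ (⊤ : ℕ∞) pyz) (hzz : ContDiff ℝ (⊤ : ℕ∞) pzz)
    (h1 : ∀ t : ℝ, deriv pyy t = -4 * β ^ 2 * (2 * pyy t + pzz t - 1) - 4 * α * pyz t)
    (h2 : ∀ t : ℝ, deriv pyz t = -2 * β ^ 2 * pyz t - 2 * α * pzz t + 2 * α * pyy t)
    (h3 : ∀ t : ℝ, deriv pzz t = 4 * α * pyz t) :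
    ∀ t : ℝ,
      iteratedDeriv 3 pzz t =
        -10 * β ^ 2 * iteratedDeriv 2 pzz t
          - 16 * (α ^ 2 + β ^ 4) * deriv pzz t
          - 96 * α ^ 2 * β ^ 2 * pzz t + 32 * α ^ 2 * β ^ 2 := by
  have dyy : Differentiable ℝ pyy := hyy.differentiable (by simp)
  have dyz : Differentiable ℝ pyz := hyz.differentiable (by simp)
  have dzz : Differentiable ℝ pzz := hzz.differentiable (by simp)
  -- second derivative of pzz
  have e1 : deriv pzz = fun t => 4 * α * pyz t := funext h3
  have hd2 : ∀ t, deriv (deriv pzz) t = 4 * α * deriv pyz t := by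
    intro t
    rw [e1, deriv_const_mul _ (dyz t)]
  have e2 : deriv (deriv pzz) = fun t =>
      4 * α * (-2 * β ^ 2 * pyz t - 2 * α * pzz t + 2 * α * pyy t) := by
    funext t; rw [hd2 t, h2 t]
  have hd3 : ∀ t, deriv (deriv (deriv pzz)) t =
      4 * α * (-2 * β ^ 2 * deriv pyz t - 2 * α * deriv pzz t + 2 * α * deriv pyy t) := by
    intro t
    rw [e2]
    have hsub : DifferentiableAt ℝ (fun t => -2 * β ^ 2 * pyz t - 2 * α * pzz t + 2 * α * pyy t) t := by
      exact (((dyz t).const_mul _).sub ((dzz t).const_mul _)).add ((dyy t).const_mul _)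
    rw [deriv_const_mul _ hsub]
    congr 1
    rw [deriv_fun_add (((dyz t).const_mul _).fun_sub ((dzz t).const_mul _)) ((dyy t).const_mul _),
      deriv_fun_sub ((dyz t).const_mul _) ((dzz t).const_mul _),
      deriv_const_mul _ (dyz t), deriv_const_mul _ (dzz t), deriv_const_mul _ (dyy t)]
  intro t
  rw [show (3 : ℕ) = 2 + 1 from rfl, iteratedDeriv_succ, iteratedDeriv_succ, iteratedDeriv_succ,
    iteratedDeriv_zero, hd3 t, hd2 t, h1 t, h2 t, h3 t]
  ring
end

section
/- Let a, b ∈ ℝ with a < b < 0. Then sup_{t ≥ 0} |e^{a t} − e^{b t}| = (a/b)^{b/(b−a)} − (a/b)^{a/(b−a)}, where the powers are real powers of the positive base a/b > 1. -/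
/-!
Write `c = a / b > 1` and let `T = log c / (b - a) > 0`, so that `e^{(b-a)T} = c`. Putting
`y = e^{b(t-T)}`, one has `e^{bt} - e^{at} = e^{aT} (c y - y^c)`, and Bernoulli's inequality
`y^c ≥ 1 + c (y - 1)` bounds this by `e^{aT} (c - 1) = e^{bT} - e^{aT}`, the value at `t = T`.
-/

open Real

theorem mul_sub_rpow_le_sub_one {p y : ℝ} (hp : 1 ≤ p) (hy : 0 ≤ y) : p * y - y ^ p ≤ p - 1 := by
  have := one_add_mul_self_le_rpow_one_add (s := y - 1) (by linarith) hp
  rw [add_sub_cancel] at this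
  linarith

theorem exp_sub_exp_le_of_exp_eq {a b T : ℝ} (hb : b ≠ 0) (hc : 1 ≤ a / b)
    (hT : exp ((b - a) * T) = a / b) (t : ℝ) :
    exp (b * t) - exp (a * t) ≤ exp (b * T) - exp (a * T) := by
  set c := a / b
  set y := exp (b * (t - T))
  have hbt : exp (b * t) = exp (b * T) * y := by rw [← exp_add]; ring_nf
  have hat : exp (a * t) = exp (a * T) * y ^ c := by
    rw [← exp_mul, ← exp_add]; congr 1; simp only [c]; field_simp; ring
  have hbT : exp (b * T) = exp (a * T) * c := by rw [← hT, ← exp_add]; ring_nf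
  calc exp (b * t) - exp (a * t) = exp (a * T) * (c * y - y ^ c) := by
        rw [hbt, hat, hbT]; ring
    _ ≤ exp (a * T) * (c - 1) :=
        mul_le_mul_of_nonneg_left (mul_sub_rpow_le_sub_one hc (exp_pos _).le) (exp_pos _).le
    _ = exp (b * T) - exp (a * T) := by rw [hbT]; ring

theorem exp_mul_log_div {c : ℝ} (hc : 0 < c) (x d : ℝ) : exp (x * (log c / d)) = c ^ (x / d) := by
  rw [rpow_def_of_pos hc]; ring_nf

theorem abs_exp_mul_sub_exp_mul {a b t : ℝ} (hab : a ≤ b) (ht : 0 ≤ t) :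
    |exp (a * t) - exp (b * t)| = exp (b * t) - exp (a * t) := by
  rw [abs_sub_comm, abs_of_nonneg]
  exact sub_nonneg.mpr (exp_le_exp.mpr (mul_le_mul_of_nonneg_right hab ht))

/-- For `a < b < 0`, the supremum of `|e^{at} - e^{bt}|` over `t ≥ 0` equals
`(a/b)^{b/(b-a)} - (a/b)^{a/(b-a)}`. -/
theorem sup_abs_exp_diff (a b : ℝ) (hab : a < b) (hb : b < 0) :
    sSup ((fun t : ℝ => |Real.exp (a * t) - Real.exp (b * t)|) '' Set.Ici 0) =
      (a / b) ^ (b / (b - a)) - (a / b) ^ (a / (b - a)) := by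
  have hba : 0 < b - a := sub_pos.mpr hab
  have hc : 1 < a / b := by rw [lt_div_iff_of_neg hb]; linarith
  set T := log (a / b) / (b - a)
  have hT : exp ((b - a) * T) = a / b := by
    rw [mul_div_cancel₀ _ hba.ne', exp_log (by linarith)]
  have hT0 : 0 ≤ T := div_nonneg (log_nonneg hc.le) hba.le
  have hmax : IsGreatest ((fun t : ℝ => |exp (a * t) - exp (b * t)|) '' Set.Ici 0)
      (exp (b * T) - exp (a * T)) := by
    refine ⟨⟨T, hT0, abs_exp_mul_sub_exp_mul hab.le hT0⟩, ?_⟩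
    rintro _ ⟨t, ht, rfl⟩
    dsimp only
    rw [abs_exp_mul_sub_exp_mul hab.le ht]
    exact exp_sub_exp_le_of_exp_eq hb.ne hc.le hT t
  rw [hmax.csSup_eq, exp_mul_log_div (by linarith) b, exp_mul_log_div (by linarith) a]
end

section
/- Let a ∈ ℝ with a < 0, and for b ∈ (a, 0) define F(b) = (a/b)^{b/(b−a)} − (a/b)^{a/(b−a)}, where the powers are real powers of the positive base a/b > 1. Then F is monotone nondecreasing on (a, 0): for all b₁, b₂ with a < b₁ ≤ b₂ < 0, F(b₁) ≤ F(b₂). In particular, for any b₀ ∈ (a, 0), the minimum of F over [b₀, 0) equals F(b₀). -/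
/-!
With `t = a / b > 1` the two exponents are `t / (1 - t) + 1` and `t / (1 - t)`, so
`F b = (t - 1) · t ^ (t / (1 - t))`, whose logarithm `log (t - 1) + t / (1 - t) · log t` has
derivative `log t / (t - 1) ^ 2 > 0` on `(1, ∞)`. Since `b ↦ a / b` is monotone on `(a, 0)`,
so is `F`.
-/

open Real Set

noncomputable def logProfile (t : ℝ) : ℝ := log (t - 1) + t / (1 - t) * log t

lemma hasDerivAt_logProfile {t : ℝ} (ht : 1 < t) :
    HasDerivAt logProfile (log t / (t - 1) ^ 2) t := by
  have ht0 : t ≠ 0 := by positivity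
  have ht1 : t - 1 ≠ 0 := by linarith
  have ht1' : 1 - t ≠ 0 := by linarith
  have hlog : HasDerivAt (fun s => log (s - 1)) (1 / (t - 1)) t := by
    simpa using ((hasDerivAt_id t).sub_const 1).log ht1
  have hfrac : HasDerivAt (fun s => s / (1 - s)) ((1 * (1 - t) - t * (0 - 1)) / (1 - t) ^ 2) t :=
    (hasDerivAt_id t).div ((hasDerivAt_const t 1).sub (hasDerivAt_id t)) ht1'
  refine (hlog.add (hfrac.mul (hasDerivAt_log ht0))).congr_deriv ?_
  field_simp
  ring

lemma strictMonoOn_logProfile : StrictMonoOn logProfile (Ioi 1) := by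
  refine strictMonoOn_of_deriv_pos (convex_Ioi 1)
    (fun t ht => (hasDerivAt_logProfile ht).continuousAt.continuousWithinAt) fun t ht => ?_
  rw [interior_Ioi] at ht
  rw [(hasDerivAt_logProfile ht).deriv]
  have : t - 1 ≠ 0 := by linarith [mem_Ioi.mp ht]
  exact div_pos (log_pos ht) (by positivity)

lemma rpow_add_one_sub_rpow_eq_exp_logProfile {t : ℝ} (ht : 1 < t) :
    t ^ (t / (1 - t) + 1) - t ^ (t / (1 - t)) = exp (logProfile t) := by
  have ht0 : 0 < t := by linarith
  rw [logProfile, exp_add, exp_log (by linarith), mul_comm (t / (1 - t)), ← rpow_def_of_pos ht0,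
    rpow_add_one ht0.ne']
  ring

lemma div_rpow_sub_div_rpow_eq_exp_logProfile {a b : ℝ} (hab : a < b) (hb : b < 0) :
    (a / b) ^ (b / (b - a)) - (a / b) ^ (a / (b - a)) = exp (logProfile (a / b)) := by
  have hexp : a / (b - a) = a / b / (1 - a / b) := by
    rw [one_sub_div hb.ne, div_div_div_cancel_right₀ hb.ne]
  have hexp' : b / (b - a) = a / (b - a) + 1 := by
    rw [div_add_one (sub_ne_zero.mpr hab.ne'), add_sub_cancel]
  rw [hexp', hexp]
  exact rpow_add_one_sub_rpow_eq_exp_logProfile ((one_lt_div_of_neg hb).mpr hab)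

lemma div_le_div_of_nonpos_left {a b₁ b₂ : ℝ} (ha : a ≤ 0) (hb₂ : b₂ < 0) (h : b₁ ≤ b₂) :
    a / b₁ ≤ a / b₂ := by
  rw [← neg_div_neg_eq a b₁, ← neg_div_neg_eq a b₂]
  exact div_le_div_of_nonneg_left (neg_nonneg.mpr ha) (neg_pos.mpr hb₂) (neg_le_neg h)

/-- For `a < 0`, the map `b ↦ (a/b)^{b/(b-a)} - (a/b)^{a/(b-a)}` is monotone nondecreasing
on `(a, 0)`, and its minimum over `[b₀, 0)` is attained at `b₀`. -/
theorem F_monotone_and_min (a : ℝ) (ha : a < 0)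
    (F : ℝ → ℝ)
    (hF : F = fun b => (a / b) ^ (b / (b - a)) - (a / b) ^ (a / (b - a))) :
    (∀ b₁ b₂ : ℝ, a < b₁ → b₁ ≤ b₂ → b₂ < 0 → F b₁ ≤ F b₂) ∧
    (∀ b₀ : ℝ, a < b₀ → b₀ < 0 → IsLeast (F '' Set.Ico b₀ 0) (F b₀)) := by
  have hF_exp : ∀ b ∈ Ioo a 0, F b = exp (logProfile (a / b)) := fun b hb => by
    subst hF
    exact div_rpow_sub_div_rpow_eq_exp_logProfile hb.1 hb.2
  have hmono : MonotoneOn F (Ioo a 0) := fun b₁ hb₁ b₂ hb₂ hle => by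
    rw [hF_exp b₁ hb₁, hF_exp b₂ hb₂, exp_le_exp]
    exact strictMonoOn_logProfile.monotoneOn ((one_lt_div_of_neg hb₁.2).mpr hb₁.1)
      ((one_lt_div_of_neg hb₂.2).mpr hb₂.1) (div_le_div_of_nonpos_left ha.le hb₂.2 hle)
  refine ⟨fun b₁ b₂ h₁ h₁₂ h₂ => hmono ⟨h₁, h₁₂.trans_lt h₂⟩ ⟨h₁.trans_le h₁₂, h₂⟩ h₁₂,
    fun b₀ h₀ h₀' => ?_⟩
  exact (hmono.mono fun b hb => ⟨h₀.trans_le hb.1, hb.2⟩).map_isLeast (isLeast_Ico h₀')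
end
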